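/- Let y ≠ 0 and ε = |y|. The minimum CRPS over Gaussian forecasts N(0, σ²) satisfies: at σ* = ε/√(ln 2), CRPS(F_{σ*}, y) < CRPS(F_point, y) = ε, where F_point is the point-mass forecast at 0. In other words, spreading a point forecast into a Gaussian with the optimal standard deviation strictly decreases the CRPS. -/

import Mathlib

open MeasureTheory Set Real

open Filter Topology

/-- Standard normal CDF. -/
noncomputable def stdNormalCDF (x : ℝ) : ℝ :=
  ∫ t in Set.Iic x, Real.exp (-t ^ 2 / 2) / Real.sqrt (2 * Real.pi)

/-- CRPS of the zero-mean Gaussian forecast `N(0, σ²)` against observation `y`. -/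
noncomputable def gaussCRPS (y : ℝ) (σ : ℝ) : ℝ :=
  ∫ x : ℝ, (stdNormalCDF (x / σ) - (if y ≤ x then (1 : ℝ) else 0)) ^ 2

/-- CRPS of the point-mass forecast at `0` against `y`. -/
noncomputable def pointCRPS (y : ℝ) : ℝ :=
  ∫ x : ℝ, ((if (0 : ℝ) ≤ x then (1 : ℝ) else 0) - (if y ≤ x then (1 : ℝ) else 0)) ^ 2

noncomputable def sg (t : ℝ) : ℝ := Real.exp (-t ^ 2 / 2) / Real.sqrt (2 * Real.pi)

lemma sqrt_two_pi_pos : 0 < Real.sqrt (2 * Real.pi) :=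
  Real.sqrt_pos.2 (by positivity)

lemma one_le_sqrt_two_pi : 1 ≤ Real.sqrt (2 * Real.pi) := by
  rw [show (1:ℝ) = Real.sqrt 1 by simp]
  exact Real.sqrt_le_sqrt (by nlinarith [Real.pi_gt_d6])

lemma sg_pos (t : ℝ) : 0 < sg t := div_pos (Real.exp_pos _) sqrt_two_pi_pos

lemma sg_continuous : Continuous sg := by
  unfold sg; fun_prop

lemma sg_integrable : Integrable sg := by
  have h : Integrable (fun t : ℝ => Real.exp (-(1/2) * t ^ 2)) :=
    integrable_exp_neg_mul_sq (by norm_num)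
  have : Integrable (fun t : ℝ => Real.exp (-t ^ 2 / 2)) := by
    convert h using 2 with t; ring_nf
  exact this.div_const _

lemma sg_integral : ∫ t : ℝ, sg t = 1 := by
  unfold sg
  rw [integral_div]
  have h : ∫ t : ℝ, Real.exp (-t ^ 2 / 2) = Real.sqrt (2 * Real.pi) := by
    have h1 := integral_gaussian (1/2)
    have h2 : Real.sqrt (Real.pi / (1/2)) = Real.sqrt (2 * Real.pi) := by
      norm_num [mul_comm]
    rw [h2] at h1
    rw [← h1]
    congr 1 with t
    ring_nf
  rw [h, div_self sqrt_two_pi_pos.ne']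

lemma exp_half_le : Real.exp (1/2) ≤ Real.sqrt (2 * Real.pi) := by
  rw [show Real.sqrt (2 * Real.pi) = Real.sqrt (2 * Real.pi) from rfl]
  have h : Real.exp (1/2) ^ 2 = Real.exp 1 := by
    rw [sq, ← Real.exp_add]; norm_num
  nlinarith [Real.sq_sqrt (by positivity : (0:ℝ) ≤ 2 * Real.pi),
    Real.exp_one_lt_d9, Real.pi_gt_d6, Real.exp_pos (1/2 : ℝ),
    sqrt_two_pi_pos]

lemma sg_le_exp (t : ℝ) : sg t ≤ Real.exp t := by
  have h1 : -t ^ 2 / 2 ≤ t + 1/2 := by nlinarith [sq_nonneg (t + 1)]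
  have h2 : Real.exp (-t ^ 2 / 2) ≤ Real.exp t * Real.exp (1/2) := by
    rw [← Real.exp_add]; exact Real.exp_le_exp.2 h1
  rw [sg, div_le_iff₀ sqrt_two_pi_pos]
  calc Real.exp (-t ^ 2 / 2) ≤ Real.exp t * Real.exp (1/2) := h2
    _ ≤ Real.exp t * Real.sqrt (2 * Real.pi) := by
        exact mul_le_mul_of_nonneg_left exp_half_le (Real.exp_pos t).le

lemma sg_le_one (t : ℝ) : sg t ≤ 1 := by
  rw [sg, div_le_one sqrt_two_pi_pos]
  calc Real.exp (-t ^ 2 / 2) ≤ 1 := Real.exp_le_one_iff.2 (by nlinarith [sq_nonneg t])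
    _ ≤ _ := one_le_sqrt_two_pi

lemma sg_neg (t : ℝ) : sg (-t) = sg t := by unfold sg; norm_num

lemma snc_eq (x : ℝ) : stdNormalCDF x = ∫ t in Set.Iic x, sg t := rfl

lemma snc_nonneg (x : ℝ) : 0 ≤ stdNormalCDF x := by
  rw [snc_eq]
  exact setIntegral_nonneg measurableSet_Iic (fun t _ => (sg_pos t).le)

lemma snc_le_exp (x : ℝ) : stdNormalCDF x ≤ Real.exp x := by
  rw [snc_eq]
  calc ∫ t in Iic x, sg t ≤ ∫ t in Iic x, Real.exp t :=
        setIntegral_mono_on sg_integrable.integrableOn (integrableOn_exp_Iic x)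
          measurableSet_Iic (fun t _ => sg_le_exp t)
    _ = Real.exp x := integral_exp_Iic x

lemma snc_add_tail (x : ℝ) : stdNormalCDF x + ∫ t in Ioi x, sg t = 1 := by
  rw [snc_eq, ← sg_integral]
  have h := integral_add_compl (s := Iic x) measurableSet_Iic sg_integrable (f := sg)
  rw [compl_Iic] at h
  rw [← h]

lemma tail_nonneg (x : ℝ) : 0 ≤ ∫ t in Ioi x, sg t :=
  setIntegral_nonneg measurableSet_Ioi (fun t _ => (sg_pos t).le)

lemma tail_le_exp (x : ℝ) : ∫ t in Ioi x, sg t ≤ Real.exp (-x) := by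
  calc ∫ t in Ioi x, sg t ≤ ∫ t in Ioi x, Real.exp (-t) :=
        setIntegral_mono_on sg_integrable.integrableOn
          (by simpa using exp_neg_integrableOn_Ioi x one_pos)
          measurableSet_Ioi (fun t _ => by rw [← sg_neg t]; simpa using sg_le_exp (-t))
    _ = Real.exp (-x) := by simpa using integral_exp_neg_Ioi x

lemma snc_le_one (x : ℝ) : stdNormalCDF x ≤ 1 := by
  have := snc_add_tail x
  have := tail_nonneg x
  linarith

lemma one_sub_snc_le_exp (x : ℝ) : 1 - stdNormalCDF x ≤ Real.exp (-x) := by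
  have := snc_add_tail x
  have := tail_le_exp x
  linarith

lemma snc_pos (x : ℝ) : 0 < stdNormalCDF x := by
  have h : stdNormalCDF x - stdNormalCDF (x - 1) = ∫ t in (x-1)..x, sg t := by
    rw [snc_eq, snc_eq, intervalIntegral.integral_Iic_sub_Iic sg_integrable.integrableOn
      sg_integrable.integrableOn]
  have hpos : 0 < ∫ t in (x-1)..x, sg t := by
    apply intervalIntegral.intervalIntegral_pos_of_pos (f := sg)
    · exact sg_integrable.intervalIntegrable
    · exact sg_pos
    · linarith
  have := snc_nonneg (x - 1)
  linarith

lemma snc_lt_one (x : ℝ) : stdNormalCDF x < 1 := by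
  have h := snc_add_tail x
  have h2 : stdNormalCDF (x+1) - stdNormalCDF x = ∫ t in x..(x+1), sg t := by
    rw [snc_eq, snc_eq, intervalIntegral.integral_Iic_sub_Iic sg_integrable.integrableOn
      sg_integrable.integrableOn]
  have hpos : 0 < ∫ t in x..(x+1), sg t := by
    apply intervalIntegral.intervalIntegral_pos_of_pos (f := sg)
    · exact sg_integrable.intervalIntegrable
    · exact sg_pos
    · linarith
  have := snc_le_one (x+1)
  linarith

lemma snc_hasDerivAt (x : ℝ) : HasDerivAt stdNormalCDF (sg x) x := by
  have key : ∀ u : ℝ, stdNormalCDF u = (∫ t in Iic (0:ℝ), sg t) + ∫ t in (0:ℝ)..u, sg t := by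
    intro u
    rw [snc_eq, ← intervalIntegral.integral_Iic_sub_Iic sg_integrable.integrableOn
      sg_integrable.integrableOn]
    ring
  have hd : HasDerivAt (fun u => (∫ t in Iic (0:ℝ), sg t) + ∫ t in (0:ℝ)..u, sg t) (sg x) x := by
    apply HasDerivAt.const_add
    exact intervalIntegral.integral_hasDerivAt_right sg_integrable.intervalIntegrable
      (sg_continuous.stronglyMeasurableAtFilter _ _) sg_continuous.continuousAt
  exact hd.congr_of_eventuallyEq (Filter.Eventually.of_forall fun u => (key u))

lemma snc_continuous : Continuous stdNormalCDF := by
  have : ∀ x : ℝ, ContinuousAt stdNormalCDF x := fun x => (snc_hasDerivAt x).continuousAt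
  exact continuous_iff_continuousAt.2 this

lemma snc_tendsto_atBot : Tendsto stdNormalCDF atBot (𝓝 0) := by
  apply squeeze_zero (fun x => snc_nonneg x) (fun x => snc_le_exp x)
  exact Real.tendsto_exp_atBot

lemma snc_tendsto_atTop : Tendsto stdNormalCDF atTop (𝓝 1) := by
  have h : Tendsto (fun x => 1 - Real.exp (-x)) atTop (𝓝 1) := by
    have : Tendsto (fun x : ℝ => Real.exp (-x)) atTop (𝓝 0) :=
      Real.tendsto_exp_atBot.comp tendsto_neg_atTop_atBot
    simpa using (tendsto_const_nhds (x := (1:ℝ))).sub this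
  apply tendsto_of_tendsto_of_tendsto_of_le_of_le h tendsto_const_nhds
  · intro x
    show 1 - Real.exp (-x) ≤ stdNormalCDF x
    have := one_sub_snc_le_exp x; linarith
  · exact fun x => snc_le_one x

lemma sg_hasDerivAt (t : ℝ) : HasDerivAt sg (-t * sg t) t := by
  have h1 : HasDerivAt (fun t : ℝ => -t ^ 2 / 2) (-t) t := by
    have := ((hasDerivAt_pow 2 t).neg).div_const 2
    simpa using this.congr_deriv (by push_cast; ring)
  have h2 := (h1.exp).div_const (Real.sqrt (2 * Real.pi))
  unfold sg
  refine h2.congr_deriv ?_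
  ring

lemma sqrt_pi_mul : Real.sqrt Real.pi * Real.sqrt (2 * Real.pi) = Real.pi * Real.sqrt 2 := by
  rw [← Real.sqrt_mul Real.pi_pos.le,
    show Real.pi * (2 * Real.pi) = 2 * Real.pi ^ 2 by ring,
    Real.sqrt_mul (by norm_num : (0:ℝ) ≤ 2), Real.sqrt_sq Real.pi_pos.le]
  ring

lemma key_cancel (t : ℝ) :
    2 * sg t ^ 2 = (Real.sqrt 2 / Real.sqrt Real.pi) * sg (Real.sqrt 2 * t) := by
  have hsq : (Real.sqrt 2 * t) ^ 2 = 2 * t ^ 2 := by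
    rw [mul_pow, Real.sq_sqrt (by norm_num : (0:ℝ) ≤ 2)]
  unfold sg
  rw [hsq, div_pow, Real.sq_sqrt (by positivity : (0:ℝ) ≤ 2 * Real.pi)]
  have he : Real.exp (-t ^ 2 / 2) ^ 2 = Real.exp (-(2 * t ^ 2) / 2) := by
    rw [sq, ← Real.exp_add]; ring_nf
  rw [he]
  have hπ : Real.sqrt Real.pi > 0 := Real.sqrt_pos.2 Real.pi_pos
  field_simp
  have h := sqrt_pi_mul
  have hππ : Real.sqrt Real.pi * Real.sqrt Real.pi = Real.pi :=
    Real.mul_self_sqrt Real.pi_pos.le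
  linear_combination h

noncomputable def Hfun (σ a x : ℝ) : ℝ :=
  x * (stdNormalCDF (x / σ) + a) ^ 2 + 2 * σ * sg (x / σ) * (stdNormalCDF (x / σ) + a)
    - σ / Real.sqrt Real.pi * stdNormalCDF (Real.sqrt 2 * x / σ)

lemma Hfun_hasDerivAt {σ : ℝ} (hσ : 0 < σ) (a x : ℝ) :
    HasDerivAt (Hfun σ a) ((stdNormalCDF (x / σ) + a) ^ 2) x := by
  have hσ' : σ ≠ 0 := hσ.ne'
  have hΦ : HasDerivAt (fun x : ℝ => stdNormalCDF (x / σ)) (sg (x / σ) * (1 / σ)) x := by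
    exact (snc_hasDerivAt (x / σ)).comp x ((hasDerivAt_id x).div_const σ)
  have hsg : HasDerivAt (fun x : ℝ => sg (x / σ)) (-(x / σ) * sg (x / σ) * (1 / σ)) x := by
    exact (sg_hasDerivAt (x / σ)).comp x ((hasDerivAt_id x).div_const σ)
  have h2 : HasDerivAt (fun x : ℝ => stdNormalCDF (Real.sqrt 2 * x / σ))
      (sg (Real.sqrt 2 * x / σ) * (Real.sqrt 2 / σ)) x := by
    have hin : HasDerivAt (fun x : ℝ => Real.sqrt 2 * x / σ) (Real.sqrt 2 / σ) x := by
      simpa [mul_div_assoc] using (((hasDerivAt_id x).const_mul (Real.sqrt 2)).div_const σ)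
    exact (snc_hasDerivAt _).comp x hin
  have hA : HasDerivAt (fun x : ℝ => x * (stdNormalCDF (x / σ) + a) ^ 2)
      (1 * (stdNormalCDF (x / σ) + a) ^ 2 +
        x * (2 * (stdNormalCDF (x / σ) + a) ^ 1 * (sg (x / σ) * (1 / σ)))) x :=
    (hasDerivAt_id x).mul ((hΦ.add_const a).pow 2)
  have hB : HasDerivAt (fun x : ℝ => 2 * σ * sg (x / σ) * (stdNormalCDF (x / σ) + a))
      ((2 * σ * (-(x / σ) * sg (x / σ) * (1 / σ))) * (stdNormalCDF (x / σ) + a) +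
        (2 * σ * sg (x / σ)) * (sg (x / σ) * (1 / σ))) x :=
    (hsg.const_mul (2 * σ)).mul (hΦ.add_const a)
  have hC : HasDerivAt (fun x : ℝ => σ / Real.sqrt Real.pi * stdNormalCDF (Real.sqrt 2 * x / σ))
      (σ / Real.sqrt Real.pi * (sg (Real.sqrt 2 * x / σ) * (Real.sqrt 2 / σ))) x :=
    h2.const_mul _
  have htot := (hA.add hB).sub hC
  refine htot.congr_deriv ?_
  symm
  have hx : Real.sqrt 2 * x / σ = Real.sqrt 2 * (x / σ) := by ring
  rw [hx]
  have hk := key_cancel (x / σ)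
  have hπ : Real.sqrt Real.pi ≠ 0 := (Real.sqrt_pos.2 Real.pi_pos).ne'
  have hk2 : Real.sqrt Real.pi * (2 * sg (x / σ) ^ 2)
      = Real.sqrt 2 * sg (Real.sqrt 2 * (x / σ)) := by
    rw [hk]; field_simp
  field_simp
  ring_nf
  ring_nf at hk2
  linear_combination (-σ) * hk2

lemma tendsto_exp_const_mul_atBot {c : ℝ} (hc : 0 < c) :
    Tendsto (fun x : ℝ => Real.exp (c * x)) atBot (𝓝 0) :=
  Real.tendsto_exp_atBot.comp (tendsto_id.const_mul_atBot hc)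

lemma tendsto_exp_neg_const_mul_atTop {c : ℝ} (hc : 0 < c) :
    Tendsto (fun x : ℝ => Real.exp (-(c * x))) atTop (𝓝 0) :=
  Real.tendsto_exp_atBot.comp (tendsto_neg_atTop_atBot.comp (tendsto_id.const_mul_atTop hc))

lemma tendsto_neg_mul_exp_const_mul_atBot {c : ℝ} (hc : 0 < c) :
    Tendsto (fun x : ℝ => -x * Real.exp (c * x)) atBot (𝓝 0) := by
  have h1 : Tendsto (fun u : ℝ => u * Real.exp (-u)) atTop (𝓝 0) := by
    simpa using Real.tendsto_pow_mul_exp_neg_atTop_nhds_zero 1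
  have h2 : Tendsto (fun x : ℝ => -(c * x)) atBot atTop :=
    tendsto_neg_atBot_atTop.comp (tendsto_id.const_mul_atBot hc)
  have h3 := (h1.comp h2).const_mul (1 / c)
  rw [mul_zero] at h3
  convert h3 using 2 with x
  simp only [Function.comp]
  rw [neg_neg]
  field_simp

lemma tendsto_mul_exp_neg_const_mul_atTop {c : ℝ} (hc : 0 < c) :
    Tendsto (fun x : ℝ => x * Real.exp (-(c * x))) atTop (𝓝 0) := by
  have h1 : Tendsto (fun u : ℝ => u * Real.exp (-u)) atTop (𝓝 0) := by
    simpa using Real.tendsto_pow_mul_exp_neg_atTop_nhds_zero 1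
  have h2 : Tendsto (fun x : ℝ => c * x) atTop atTop := tendsto_id.const_mul_atTop hc
  have h3 := (h1.comp h2).const_mul (1 / c)
  rw [mul_zero] at h3
  convert h3 using 2 with x
  simp only [Function.comp]
  field_simp

lemma Hfun_tendsto_atBot {σ : ℝ} (hσ : 0 < σ) : Tendsto (Hfun σ 0) atBot (𝓝 0) := by
  have hσ' : σ ≠ 0 := hσ.ne'
  have hT1 : Tendsto (fun x : ℝ => x * (stdNormalCDF (x / σ) + 0) ^ 2) atBot (𝓝 0) := by
    apply squeeze_zero_norm' (a := fun x => -x * Real.exp (2 / σ * x))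
    · filter_upwards [eventually_le_atBot (0 : ℝ)] with x hx
      have h0 := snc_nonneg (x / σ)
      have h1 := snc_le_exp (x / σ)
      have hsq : stdNormalCDF (x / σ) ^ 2 ≤ Real.exp (2 / σ * x) := by
        have he : Real.exp (x / σ) ^ 2 = Real.exp (2 / σ * x) := by
          rw [sq, ← Real.exp_add]; congr 1; field_simp; ring
        nlinarith
      rw [add_zero, norm_mul, norm_pow, Real.norm_eq_abs, Real.norm_eq_abs,
        abs_of_nonpos hx, sq_abs]
      exact mul_le_mul (le_refl (-x)) hsq (sq_nonneg _) (neg_nonneg.2 hx)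
    · exact tendsto_neg_mul_exp_const_mul_atBot (by positivity)
  have hT2 : Tendsto (fun x : ℝ => 2 * σ * sg (x / σ) * (stdNormalCDF (x / σ) + 0))
      atBot (𝓝 0) := by
    apply squeeze_zero_norm' (a := fun x => 2 * σ * Real.exp (1 / σ * x))
    · filter_upwards [] with x
      have h0 := snc_nonneg (x / σ)
      have h1 := snc_le_exp (x / σ)
      have hs := sg_pos (x / σ)
      have hs1 := sg_le_one (x / σ)
      rw [add_zero, Real.norm_eq_abs, abs_of_nonneg (by positivity)]
      have he : Real.exp (x / σ) = Real.exp (1 / σ * x) := by congr 1; field_simp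
      have key : sg (x / σ) * stdNormalCDF (x / σ) ≤ Real.exp (1 / σ * x) := by
        calc sg (x / σ) * stdNormalCDF (x / σ) ≤ 1 * Real.exp (1 / σ * x) := by
              rw [← he]; exact mul_le_mul hs1 h1 h0 zero_le_one
          _ = _ := one_mul _
      have := mul_le_mul_of_nonneg_left key (by positivity : (0:ℝ) ≤ 2 * σ)
      nlinarith
    · have := (tendsto_exp_const_mul_atBot (show (0:ℝ) < 1 / σ by positivity)).const_mul (2 * σ)
      simpa using this
  have hT3 : Tendsto (fun x : ℝ => σ / Real.sqrt Real.pi * stdNormalCDF (Real.sqrt 2 * x / σ))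
      atBot (𝓝 0) := by
    apply squeeze_zero_norm' (a := fun x => σ / Real.sqrt Real.pi * Real.exp (Real.sqrt 2 / σ * x))
    · filter_upwards [] with x
      have h0 := snc_nonneg (Real.sqrt 2 * x / σ)
      have h1 := snc_le_exp (Real.sqrt 2 * x / σ)
      have hπ : (0:ℝ) < Real.sqrt Real.pi := Real.sqrt_pos.2 Real.pi_pos
      rw [Real.norm_eq_abs, abs_of_nonneg (by positivity)]
      have he : Real.exp (Real.sqrt 2 * x / σ) = Real.exp (Real.sqrt 2 / σ * x) := by
        congr 1; ring
      have hc : (0:ℝ) ≤ σ / Real.sqrt Real.pi := by positivity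
      nlinarith
    · have hc : (0:ℝ) < Real.sqrt 2 / σ := by positivity
      have := (tendsto_exp_const_mul_atBot hc).const_mul (σ / Real.sqrt Real.pi)
      simpa using this
  have h := (hT1.add hT2).sub hT3
  have h2 : Tendsto (Hfun σ 0) atBot (𝓝 (0 + 0 - 0)) :=
    h.congr fun x => by simp only [Hfun]
  simpa using h2

lemma Hfun_tendsto_atTop {σ : ℝ} (hσ : 0 < σ) :
    Tendsto (Hfun σ (-1)) atTop (𝓝 (-(σ / Real.sqrt Real.pi))) := by
  have hσ' : σ ≠ 0 := hσ.ne'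
  have hT1 : Tendsto (fun x : ℝ => x * (stdNormalCDF (x / σ) + (-1)) ^ 2) atTop (𝓝 0) := by
    apply squeeze_zero_norm' (a := fun x => x * Real.exp (-(2 / σ * x)))
    · filter_upwards [eventually_ge_atTop (0 : ℝ)] with x hx
      have h0 := snc_le_one (x / σ)
      have h1 := one_sub_snc_le_exp (x / σ)
      have hsq : (stdNormalCDF (x / σ) + (-1)) ^ 2 ≤ Real.exp (-(2 / σ * x)) := by
        have he : Real.exp (-(x / σ)) ^ 2 = Real.exp (-(2 / σ * x)) := by
          rw [sq, ← Real.exp_add]; congr 1; field_simp; ring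
        nlinarith [Real.exp_pos (-(x / σ))]
      rw [norm_mul, norm_pow, Real.norm_eq_abs, Real.norm_eq_abs, abs_of_nonneg hx, sq_abs]
      exact mul_le_mul (le_refl x) hsq (sq_nonneg _) hx
    · exact tendsto_mul_exp_neg_const_mul_atTop (by positivity)
  have hT2 : Tendsto (fun x : ℝ => 2 * σ * sg (x / σ) * (stdNormalCDF (x / σ) + (-1)))
      atTop (𝓝 0) := by
    apply squeeze_zero_norm' (a := fun x => 2 * σ * Real.exp (-(1 / σ * x)))
    · filter_upwards [] with x
      have h0 := snc_le_one (x / σ)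
      have h1 := one_sub_snc_le_exp (x / σ)
      have hs := sg_pos (x / σ)
      have hs1 := sg_le_one (x / σ)
      have he : Real.exp (-(x / σ)) = Real.exp (-(1 / σ * x)) := by congr 1; field_simp
      rw [Real.norm_eq_abs]
      rw [show 2 * σ * sg (x / σ) * (stdNormalCDF (x / σ) + (-1))
        = -(2 * σ * sg (x / σ) * (1 - stdNormalCDF (x / σ))) by ring, abs_neg,
        abs_of_nonneg (mul_nonneg (mul_nonneg (by positivity) hs.le) (by linarith))]
      have key : sg (x / σ) * (1 - stdNormalCDF (x / σ)) ≤ Real.exp (-(1 / σ * x)) := by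
        calc sg (x / σ) * (1 - stdNormalCDF (x / σ)) ≤ 1 * Real.exp (-(1 / σ * x)) := by
              rw [← he]; exact mul_le_mul hs1 h1 (by linarith) zero_le_one
          _ = _ := one_mul _
      have := mul_le_mul_of_nonneg_left key (by positivity : (0:ℝ) ≤ 2 * σ)
      nlinarith
    · have hc : (0:ℝ) < 1 / σ := by positivity
      have := (tendsto_exp_neg_const_mul_atTop hc).const_mul (2 * σ)
      simpa using this
  have hT3 : Tendsto (fun x : ℝ => σ / Real.sqrt Real.pi * stdNormalCDF (Real.sqrt 2 * x / σ))
      atTop (𝓝 (σ / Real.sqrt Real.pi * 1)) := by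
    apply Tendsto.const_mul
    apply snc_tendsto_atTop.comp
    have h2 : Tendsto (fun x : ℝ => Real.sqrt 2 * x) atTop atTop :=
      tendsto_id.const_mul_atTop (Real.sqrt_pos.2 (by norm_num))
    exact h2.atTop_div_const hσ
  have h := (hT1.add hT2).sub hT3
  have h2 : Tendsto (Hfun σ (-1)) atTop (𝓝 (0 + 0 - σ / Real.sqrt Real.pi * 1)) :=
    h.congr fun x => by simp only [Hfun]
  simpa using h2

lemma snc_sq_Iic {σ : ℝ} (hσ : 0 < σ) (y : ℝ) :
    IntegrableOn (fun x : ℝ => stdNormalCDF (x / σ) ^ 2) (Iic y) ∧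
      ∫ x in Iic y, stdNormalCDF (x / σ) ^ 2 = Hfun σ 0 y := by
  have hderiv : ∀ x ∈ Ici (-y), HasDerivAt (fun x : ℝ => -Hfun σ 0 (-x))
      (stdNormalCDF (-x / σ) ^ 2) x := by
    intro x _
    have h := (Hfun_hasDerivAt hσ 0 (-x)).comp x (hasDerivAt_neg x)
    have h2 := h.neg
    refine h2.congr_deriv ?_
    simp
  have hpos : ∀ x ∈ Ioi (-y), 0 ≤ stdNormalCDF (-x / σ) ^ 2 := fun x _ => sq_nonneg _
  have htend : Tendsto (fun x : ℝ => -Hfun σ 0 (-x)) atTop (𝓝 0) := by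
    have := ((Hfun_tendsto_atBot hσ).comp tendsto_neg_atTop_atBot).neg
    simpa using this
  have hint := integrableOn_Ioi_deriv_of_nonneg' hderiv hpos htend
  have heval := integral_Ioi_of_hasDerivAt_of_nonneg' hderiv hpos htend
  have hpre : (Neg.neg : ℝ → ℝ) ⁻¹' (Iic y) = Ici (-y) := by
    ext x; simp [neg_le]
  constructor
  · have hiff := MeasurePreserving.integrableOn_comp_preimage
      (Measure.measurePreserving_neg (volume : Measure ℝ))
      (Homeomorph.neg ℝ).measurableEmbedding
      (f := fun x : ℝ => stdNormalCDF (x / σ) ^ 2) (s := Iic y)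
    rw [hpre] at hiff
    exact hiff.1 ((integrableOn_Ici_iff_integrableOn_Ioi (by simp)).2 hint)
  · have hcomp : ∫ x in Iic y, stdNormalCDF (x / σ) ^ 2
        = ∫ x in Ioi (-y), stdNormalCDF (-x / σ) ^ 2 := by
      have h := integral_comp_neg_Ioi (c := -y) (f := fun x : ℝ => stdNormalCDF (x / σ) ^ 2)
      rw [neg_neg] at h
      exact h.symm
    rw [hcomp, heval]
    simp

lemma snc_sq_Ioi {σ : ℝ} (hσ : 0 < σ) (y : ℝ) :
    IntegrableOn (fun x : ℝ => (stdNormalCDF (x / σ) - 1) ^ 2) (Ioi y) ∧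
      ∫ x in Ioi y, (stdNormalCDF (x / σ) - 1) ^ 2
        = -(σ / Real.sqrt Real.pi) - Hfun σ (-1) y := by
  have hderiv : ∀ x ∈ Ici y, HasDerivAt (Hfun σ (-1)) ((stdNormalCDF (x / σ) - 1) ^ 2) x := by
    intro x _
    have := Hfun_hasDerivAt hσ (-1) x
    simpa [sub_eq_add_neg] using this
  have hpos : ∀ x ∈ Ioi y, 0 ≤ (stdNormalCDF (x / σ) - 1) ^ 2 := fun x _ => sq_nonneg _
  exact ⟨integrableOn_Ioi_deriv_of_nonneg' hderiv hpos (Hfun_tendsto_atTop hσ),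
    integral_Ioi_of_hasDerivAt_of_nonneg' hderiv hpos (Hfun_tendsto_atTop hσ)⟩

lemma gauss_formula {σ : ℝ} (hσ : 0 < σ) (y : ℝ) :
    gaussCRPS y σ
      = y * (2 * stdNormalCDF (y / σ) - 1) + 2 * σ * sg (y / σ) - σ / Real.sqrt Real.pi := by
  obtain ⟨hintA, hA⟩ := snc_sq_Iic hσ y
  obtain ⟨hintB, hB⟩ := snc_sq_Ioi hσ y
  set f : ℝ → ℝ := fun x => (stdNormalCDF (x / σ) - if y ≤ x then (1:ℝ) else 0) ^ 2 with hf
  have h1 : IntegrableOn f (Iio y) := by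
    apply (hintA.mono_set Iio_subset_Iic_self).congr_fun ?_ measurableSet_Iio
    intro x hx
    simp [hf, not_le.2 hx.out]
  have h2 : IntegrableOn f (Ici y) := by
    apply ((integrableOn_Ici_iff_integrableOn_Ioi (by simp)).2 hintB).congr_fun ?_ measurableSet_Ici
    intro x hx
    simp [hf, hx.out]
  have hsplit := intervalIntegral.integral_Iio_add_Ici (μ := (volume : Measure ℝ)) (f := f) (b := y) h1 h2
  have e1 : ∫ x in Iio y, f x = Hfun σ 0 y := by
    rw [setIntegral_congr_fun measurableSet_Iio
      (fun x hx => by simp [hf, not_le.2 hx.out] : EqOn f (fun x => stdNormalCDF (x / σ) ^ 2) (Iio y)),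
      setIntegral_congr_set Iio_ae_eq_Iic, hA]
  have e2 : ∫ x in Ici y, f x = -(σ / Real.sqrt Real.pi) - Hfun σ (-1) y := by
    rw [setIntegral_congr_fun measurableSet_Ici
      (fun x hx => by simp [hf, hx.out] :
        EqOn f (fun x => (stdNormalCDF (x / σ) - 1) ^ 2) (Ici y)),
      setIntegral_congr_set Ioi_ae_eq_Ici.symm, hB]
  have key : gaussCRPS y σ = Hfun σ 0 y + (-(σ / Real.sqrt Real.pi) - Hfun σ (-1) y) := by
    rw [gaussCRPS, ← hsplit, e1, e2]
  rw [key]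
  simp only [Hfun]
  ring

lemma pointCRPS_eq (y : ℝ) : pointCRPS y = |y| := by
  rcases le_or_gt 0 y with hy | hy
  · have hfun : (fun x : ℝ =>
        ((if (0:ℝ) ≤ x then (1:ℝ) else 0) - if y ≤ x then (1:ℝ) else 0) ^ 2)
        = (Ico (0:ℝ) y).indicator (fun _ => (1:ℝ)) := by
      ext x
      by_cases h0 : (0:ℝ) ≤ x <;> by_cases h1 : y ≤ x
      · simp [indicator, h0, h1, not_lt.2 h1]
      · simp [indicator, h0, h1, h0, lt_of_not_ge h1]
      · exact absurd (hy.trans h1) h0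
      · simp [indicator, h0, h1]
    rw [pointCRPS, hfun, integral_indicator_const _ measurableSet_Ico, Real.volume_real_Ico_of_le (by linarith),
      smul_eq_mul, mul_one, sub_zero, abs_of_nonneg hy]
  · have hfun : (fun x : ℝ =>
        ((if (0:ℝ) ≤ x then (1:ℝ) else 0) - if y ≤ x then (1:ℝ) else 0) ^ 2)
        = (Ico y (0:ℝ)).indicator (fun _ => (1:ℝ)) := by
      ext x
      by_cases h0 : (0:ℝ) ≤ x <;> by_cases h1 : y ≤ x
      · simp [indicator, h0, h1, not_lt.2 h0]
      · exact absurd (hy.le.trans h0) h1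
      · simp [indicator, h0, h1, lt_of_not_ge h0]
      · simp [indicator, h0, h1]
    rw [pointCRPS, hfun, integral_indicator_const _ measurableSet_Ico, Real.volume_real_Ico_of_le (by linarith),
      smul_eq_mul, mul_one, zero_sub, abs_of_neg hy]

/-- At the optimal standard deviation `σ* = |y|/√(ln 2)`, the Gaussian CRPS is strictly
below the CRPS of the point forecast at 0, which equals `|y|`. -/
theorem crps_gauss_lt_point (y : ℝ) (hy : y ≠ 0) :
    gaussCRPS y (|y| / Real.sqrt (Real.log 2)) < pointCRPS y ∧ pointCRPS y = |y| := by
  have hlog : 0 < Real.log 2 := Real.log_pos (by norm_num)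
  have hk : 0 < Real.sqrt (Real.log 2) := Real.sqrt_pos.2 hlog
  have hay : 0 < |y| := abs_pos.2 hy
  set σ := |y| / Real.sqrt (Real.log 2) with hσdef
  have hσ : 0 < σ := by positivity
  refine ⟨?_, pointCRPS_eq y⟩
  rw [gauss_formula hσ y, pointCRPS_eq y]
  set z := y / σ with hz
  have hz2 : z ^ 2 = Real.log 2 := by
    rw [hz, hσdef]
    rw [div_div_eq_mul_div, div_pow, mul_pow, Real.sq_sqrt hlog.le, sq_abs]
    field_simp
  have hexp : Real.exp (-z ^ 2 / 2) = (Real.sqrt 2)⁻¹ := by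
    rw [hz2, show -Real.log 2 / 2 = Real.log 2 * (-(1/2) : ℝ) by ring,
      ← Real.rpow_def_of_pos (by norm_num : (0:ℝ) < 2),
      Real.rpow_neg (by norm_num : (0:ℝ) ≤ 2), Real.sqrt_eq_rpow]
  have hsqrt : Real.sqrt 2 * Real.sqrt (2 * Real.pi) = 2 * Real.sqrt Real.pi := by
    rw [← Real.sqrt_mul (by norm_num : (0:ℝ) ≤ 2),
      show (2:ℝ) * (2 * Real.pi) = 2 ^ 2 * Real.pi by ring,
      Real.sqrt_mul (by positivity), Real.sqrt_sq (by norm_num : (0:ℝ) ≤ 2)]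
  have hcancel : 2 * σ * sg z - σ / Real.sqrt Real.pi = 0 := by
    rw [sg, hexp]
    have hπ : (0:ℝ) < Real.sqrt Real.pi := Real.sqrt_pos.2 Real.pi_pos
    have h2 : (0:ℝ) < Real.sqrt 2 := by positivity
    have hs2 : Real.sqrt 2 ^ 2 = 2 := Real.sq_sqrt (by norm_num)
    field_simp
    linear_combination (-(|y| * (Real.sqrt (Real.log 2))⁻¹)) * hsqrt
  rcases hy.lt_or_gt with hneg | hpos
  · rw [abs_of_neg hneg]
    have h0 := snc_pos z
    nlinarith
  · rw [abs_of_pos hpos]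
    have h1 := snc_lt_one z
    nlinarith
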